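/- For all i ≠ j and all signs ε, δ ∈ {+1,−1}: (K+1)(X_i · I_{ij}^ε P_i^δ) = δ (2 I_{ij}^ε P_i^δ − 1/2), an inhomogeneous proper-value equation with proper value 2δ and co-value −δ/2. -/

import Mathlib

open scoped TensorProduct

noncomputable section

/-- The standard positive-definite quadratic form on `ℝ³`. -/
abbrev Q3 : QuadraticForm ℝ (Fin 3 → ℝ) :=
  QuadraticMap.weightedSumSquares ℝ (fun _ : Fin 3 => (1 : ℝ))

/-- The Clifford algebra of 3-dimensional Euclidean space. -/
abbrev Cl3 : Type := CliffordAlgebra Q3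

/-- The tensor product of two copies of `Cl3`, as ℝ-algebras. -/
abbrev A3 : Type := Cl3 ⊗[ℝ] Cl3

/-- The generators `e₁, e₂, e₃` (indexed by `Fin 3`). -/
def e (l : Fin 3) : Cl3 := CliffordAlgebra.ι Q3 (Pi.single l 1)

/-- `X_l := e_l ⊗ e_l`. -/
def X (l : Fin 3) : A3 := e l ⊗ₜ[ℝ] e l

/-- `w^i := (e_j e_k) ⊗ 1` for `(i,j,k)` a cyclic permutation of the indices. -/
def w (i : Fin 3) : A3 := (e (i + 1) * e (i + 2)) ⊗ₜ[ℝ] (1 : Cl3)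

/-- The (ℝ-linear) operators `J_l(U) := (1/2)(w^l U − U w^l)`. -/
def J (l : Fin 3) (U : A3) : A3 := (1/2 : ℝ) • (w l * U - U * w l)

/-- Kähler's total angular momentum operator `K+1`. -/
def K1 (U : A3) : A3 := J 0 U * w 0 + J 1 U * w 1 + J 2 U * w 2

/-- The idempotents `I_{ij}^ε := (1/2)(1 + ε X_i X_j)`. -/
def Iem (i j : Fin 3) (ε : ℝ) : A3 := (1/2 : ℝ) • ((1 : A3) + ε • (X i * X j))

/-- The idempotents `P_l^δ := (1/2)(1 + δ X_l)`. -/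
def P (l : Fin 3) (δ : ℝ) : A3 := (1/2 : ℝ) • ((1 : A3) + δ • X l)

/-!
Each `w l` squares to `-1`, so `J l U * w l` is `0` when `U` commutes with `w l` and is `U` when
it anticommutes with `w l`. Now `X m` commutes with `w m` and anticommutes with the other two
`w l`, and for `i ≠ j` the product `X i * X j` commutes only with `w k`, `k` the third index.
Hence `K1` kills `1` and doubles `X i`, `X j` and `X i * X j`. As the `X l` commute and square
to `1`, `X i * (Iem i j ε * P i δ)` is a combination of these four elements, and comparing with
the right-hand side leaves only `δ * δ = 1`.
-/

def AntiCommute {R : Type*} [Ring R] (a b : R) : Prop := a * b = -(b * a)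

section AntiCommute

variable {R : Type*} [Ring R] {a b c : R}

theorem AntiCommute.symm (h : AntiCommute a b) : AntiCommute b a := by
  unfold AntiCommute at h ⊢
  rw [h, neg_neg]

theorem AntiCommute.mul_mul_self_eq_neg_one (h : AntiCommute a b) (ha : a * a = 1)
    (hb : b * b = 1) : a * b * (a * b) = -1 := by
  have hba : b * a = -(a * b) := h.symm
  rw [mul_assoc, ← mul_assoc b, hba, neg_mul, mul_neg, ← mul_assoc, ← mul_assoc, ha, one_mul,
    hb]

theorem AntiCommute.commute_mul_right (hb : AntiCommute a b) (hc : AntiCommute a c) :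
    Commute a (b * c) := by
  unfold AntiCommute at hb hc
  rw [Commute, SemiconjBy, ← mul_assoc, hb, neg_mul, mul_assoc, hc, mul_neg, neg_neg, mul_assoc]

theorem Commute.antiCommute_mul_right (hb : Commute a b) (hc : AntiCommute a c) :
    AntiCommute a (b * c) := by
  unfold AntiCommute at hc ⊢
  rw [← mul_assoc, hb.eq, mul_assoc, hc, mul_neg, mul_assoc]

theorem AntiCommute.mul_right_of_commute (hb : AntiCommute a b) (hc : Commute a c) :
    AntiCommute a (b * c) := by
  unfold AntiCommute at hb ⊢
  rw [← mul_assoc, hb, neg_mul, mul_assoc, hc.eq, mul_assoc]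

theorem AntiCommute.tmul {S : Type*} [Ring S] [Algebra ℝ R] [Algebra ℝ S] {a' : R} {b b' : S}
    (ha : AntiCommute a a') (hb : Commute b b') : AntiCommute (a ⊗ₜ[ℝ] b) (a' ⊗ₜ[ℝ] b') := by
  unfold AntiCommute at ha ⊢
  rw [Algebra.TensorProduct.tmul_mul_tmul, Algebra.TensorProduct.tmul_mul_tmul, ha, hb.eq,
    TensorProduct.neg_tmul]

end AntiCommute

theorem fin3_eq_add_one_or_eq_add_two {l m : Fin 3} (h : m ≠ l) : m = l + 1 ∨ m = l + 2 := by
  revert l m; decide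

theorem fin3_eq_or_eq_of_ne_of_ne {i j k l : Fin 3} (hij : i ≠ j) (hki : k ≠ i) (hkj : k ≠ j)
    (hl : l ≠ k) : l = i ∨ l = j := by
  revert i j k l; decide

theorem e_mul_self (l : Fin 3) : e l * e l = 1 := by
  rw [e, CliffordAlgebra.ι_sq_scalar]
  simp [QuadraticMap.weightedSumSquares_apply, Pi.single_apply]

theorem antiCommute_e {l m : Fin 3} (h : l ≠ m) : AntiCommute (e l) (e m) := by
  apply CliffordAlgebra.ι_mul_ι_comm_of_isOrtho
  fin_cases l <;> fin_cases m <;>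
    simp_all [QuadraticMap.IsOrtho, QuadraticMap.weightedSumSquares_apply, Pi.single_apply,
      Fin.sum_univ_three]

theorem commute_e_mul_e (l : Fin 3) : Commute (e l) (e (l + 1) * e (l + 2)) :=
  (antiCommute_e (by revert l; decide)).commute_mul_right (antiCommute_e (by revert l; decide))

theorem antiCommute_e_mul_e {l m : Fin 3} (h : m ≠ l) :
    AntiCommute (e m) (e (l + 1) * e (l + 2)) := by
  rcases fin3_eq_add_one_or_eq_add_two h with rfl | rfl
  · exact (Commute.refl _).antiCommute_mul_right (antiCommute_e (by revert l; decide))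
  · exact (antiCommute_e (by revert l; decide)).mul_right_of_commute (Commute.refl _)

theorem w_mul_self (l : Fin 3) : w l * w l = -1 := by
  rw [w, Algebra.TensorProduct.tmul_mul_tmul, one_mul,
    (antiCommute_e (by revert l; decide)).mul_mul_self_eq_neg_one (e_mul_self _) (e_mul_self _),
    TensorProduct.neg_tmul, Algebra.TensorProduct.one_def]

theorem X_mul_self (m : Fin 3) : X m * X m = 1 := by
  rw [X, Algebra.TensorProduct.tmul_mul_tmul, e_mul_self, Algebra.TensorProduct.one_def]

theorem commute_X (l m : Fin 3) : Commute (X l) (X m) := by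
  rcases eq_or_ne l m with rfl | h
  · exact Commute.refl _
  · have h' := antiCommute_e h
    unfold AntiCommute at h'
    rw [Commute, SemiconjBy, X, X, Algebra.TensorProduct.tmul_mul_tmul,
      Algebra.TensorProduct.tmul_mul_tmul, h', TensorProduct.neg_tmul, TensorProduct.tmul_neg,
      neg_neg]

theorem commute_w_X (l : Fin 3) : Commute (w l) (X l) :=
  ((commute_e_mul_e l).symm).tmul (Commute.one_left _)

theorem antiCommute_w_X {l m : Fin 3} (h : m ≠ l) : AntiCommute (w l) (X m) :=
  (antiCommute_e_mul_e h).symm.tmul (Commute.one_left _)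

theorem J_add (l : Fin 3) (U V : A3) : J l (U + V) = J l U + J l V := by
  simp only [J, mul_add, add_mul]
  module

theorem K1_add (U V : A3) : K1 (U + V) = K1 U + K1 V := by
  simp only [K1, J_add, add_mul]
  abel

theorem K1_smul (c : ℝ) (U : A3) : K1 (c • U) = c • K1 U := by
  simp only [K1, J, mul_smul_comm, smul_mul_assoc, ← smul_sub, smul_add, smul_comm c]

theorem J_eq_zero_of_commute {l : Fin 3} {U : A3} (h : Commute (w l) U) : J l U = 0 := by
  rw [J, h.eq, sub_self, smul_zero]

theorem J_mul_w_of_antiCommute {l : Fin 3} {U : A3} (h : AntiCommute (w l) U) :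
    J l U * w l = U := by
  unfold AntiCommute at h
  rw [J, h, smul_mul_assoc, sub_mul, neg_mul, mul_assoc, w_mul_self, mul_neg, mul_one]
  module

theorem K1_eq_two_smul {U : A3} (k : Fin 3) (hk : Commute (w k) U)
    (h : ∀ l ≠ k, AntiCommute (w l) U) : K1 U = (2 : ℝ) • U := by
  have hJ (l : Fin 3) : J l U * w l = if l = k then 0 else U := by
    split_ifs with hl
    · rw [hl, J_eq_zero_of_commute hk, zero_mul]
    · exact J_mul_w_of_antiCommute (h l hl)
  rw [K1, hJ, hJ, hJ, two_smul]
  fin_cases k <;> simp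

theorem K1_one : K1 1 = 0 := by
  simp [K1, J_eq_zero_of_commute (Commute.one_right _)]

theorem K1_X (m : Fin 3) : K1 (X m) = (2 : ℝ) • X m :=
  K1_eq_two_smul m (commute_w_X m) fun _ hl => antiCommute_w_X hl.symm

theorem K1_X_mul_X {i j : Fin 3} (hij : i ≠ j) : K1 (X i * X j) = (2 : ℝ) • (X i * X j) := by
  obtain ⟨k, hki, hkj⟩ : ∃ k, k ≠ i ∧ k ≠ j := by revert i j; decide
  refine K1_eq_two_smul k
    ((antiCommute_w_X hki.symm).commute_mul_right (antiCommute_w_X hkj.symm)) fun l hl => ?_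
  rcases fin3_eq_or_eq_of_ne_of_ne hij hki hkj hl with rfl | rfl
  · exact (commute_w_X l).antiCommute_mul_right (antiCommute_w_X hij.symm)
  · exact (antiCommute_w_X hij).mul_right_of_commute (commute_w_X l)

theorem X_mul_X_mul_X_self (i j : Fin 3) : X i * X j * X i = X j := by
  rw [(commute_X i j).eq, mul_assoc, X_mul_self, mul_one]

theorem Iem_mul_P (i j : Fin 3) (ε δ : ℝ) :
    Iem i j ε * P i δ = (1 / 4 : ℝ) • (1 + δ • X i + ε • (X i * X j) + (ε * δ) • X j) := by
  simp only [Iem, P, mul_add, add_mul, one_mul, mul_one, smul_mul_assoc, mul_smul_comm,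
    X_mul_X_mul_X_self]
  module

theorem X_mul_Iem_mul_P (i j : Fin 3) (ε δ : ℝ) :
    X i * (Iem i j ε * P i δ) = (1 / 4 : ℝ) • (δ • 1 + X i + ε • X j + (ε * δ) • (X i * X j)) := by
  simp only [Iem_mul_P, mul_add, mul_one, mul_smul_comm, ← mul_assoc, X_mul_self, one_mul]
  module

theorem stmt11_general (i j : Fin 3) (hij : i ≠ j)
    (ε δ : ℝ) (hδ : δ = 1 ∨ δ = -1) :
    K1 (X i * (Iem i j ε * P i δ)) =
      δ • (2 * (Iem i j ε * P i δ) - (1/2 : ℝ) • (1 : A3)) := by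
  have hδδ : δ * δ = 1 := by rcases hδ with rfl | rfl <;> norm_num
  rw [X_mul_Iem_mul_P, K1_smul, K1_add, K1_add, K1_add, K1_smul, K1_smul, K1_smul, K1_one, K1_X,
    K1_X, K1_X_mul_X hij, Iem_mul_P, two_mul]
  linear_combination (norm := module) (-(1 / 2) : ℝ) • hδδ • (X i + ε • X j)

/-- For `i ≠ j` and signs `ε, δ`:
`(K+1)(X_i I_{ij}^ε P_i^δ) = δ (2 I_{ij}^ε P_i^δ − 1/2)`. -/
theorem stmt11 (i j : Fin 3) (hij : i ≠ j)
    (ε δ : ℝ) (hε : ε = 1 ∨ ε = -1) (hδ : δ = 1 ∨ δ = -1) :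
    K1 (X i * (Iem i j ε * P i δ)) =
      δ • (2 * (Iem i j ε * P i δ) - (1/2 : ℝ) • (1 : A3)) :=
  stmt11_general i j hij ε δ hδ
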